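/- Let X be a partially ordered set and C : X → Coalg_K a coalgebra representation. For each x ∈ X, there is a functor ex_x^{cs} : M^{C_x} → Com^cs-C defined by (ex_x^{cs}(M))_y = α^*(M) if α : x → y exists in X, and 0 otherwise, and ex_x^{cs} is left adjoint to the evaluation functor ev_x^{cs} : Com^cs-C → M^{C_x}, M ↦ M_x. Moreover ev_x^{cs} is exact, so ex_x^{cs} preserves projective objects. -/

import Mathlib

open TensorProduct CategoryTheory CategoryTheory.Limits

universe u

set_option maxHeartbeats 1000000
noncomputable section

namespace Formal

variable (K : Type u) [Field K]

structure Comod (C : Type u) [AddCommGroup C] [Module K C] [Coalgebra K C] :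
    Type (u + 1) where
  carrier : Type u
  [acg : AddCommGroup carrier]
  [mod : Module K carrier]
  ρ : carrier →ₗ[K] carrier ⊗[K] C
  counit_comp' :
    (TensorProduct.rid K carrier).toLinearMap ∘ₗ
      LinearMap.lTensor carrier (Coalgebra.counit (R := K) (A := C)) ∘ₗ ρ = LinearMap.id
  coassoc' :
    (TensorProduct.assoc K carrier C C).toLinearMap ∘ₗ LinearMap.rTensor C ρ ∘ₗ ρ =
      LinearMap.lTensor carrier (Coalgebra.comul (R := K) (A := C)) ∘ₗ ρ

attribute [instance] Comod.acg Comod.mod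

variable {K}
variable {C D E : Type u}
  [AddCommGroup C] [Module K C] [Coalgebra K C]
  [AddCommGroup D] [Module K D] [Coalgebra K D]
  [AddCommGroup E] [Module K E] [Coalgebra K E]

@[ext]
structure ComodHom (M N : Comod K C) : Type u where
  f : M.carrier →ₗ[K] N.carrier
  compat : N.ρ ∘ₗ f = LinearMap.rTensor C f ∘ₗ M.ρ

instance : Category (Comod K C) where
  Hom := ComodHom
  id M := ⟨LinearMap.id, by rw [LinearMap.comp_id, LinearMap.rTensor_id, LinearMap.id_comp]⟩
  comp {M N P} g h :=
    ⟨h.f ∘ₗ g.f, by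
      rw [← LinearMap.comp_assoc, h.compat, LinearMap.comp_assoc, g.compat,
        ← LinearMap.comp_assoc, ← LinearMap.rTensor_comp]⟩
  id_comp f := by apply ComodHom.ext; exact LinearMap.comp_id _
  comp_id f := by apply ComodHom.ext; exact LinearMap.id_comp _
  assoc f g h := by apply ComodHom.ext; exact (LinearMap.comp_assoc _ _ _).symm

@[simp] lemma ComodHom.id_f (M : Comod K C) : (𝟙 M : M ⟶ M).f = LinearMap.id := rfl

@[simp] lemma ComodHom.comp_f {M N P : Comod K C} (g : M ⟶ N) (h : N ⟶ P) :
    (g ≫ h).f = h.f ∘ₗ g.f := rfl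

section Cores

variable (α : C →ₗc[K] D) (M : Comod K C)

/-- The coaction of the corestricted comodule. -/
def coresρ : M.carrier →ₗ[K] M.carrier ⊗[K] D :=
  LinearMap.lTensor M.carrier α.toLinearMap ∘ₗ M.ρ

lemma cores_counit :
    (TensorProduct.rid K M.carrier).toLinearMap ∘ₗ
      LinearMap.lTensor M.carrier (Coalgebra.counit (R := K) (A := D)) ∘ₗ coresρ α M =
      LinearMap.id := by
  rw [coresρ, ← LinearMap.comp_assoc M.ρ, ← LinearMap.lTensor_comp, α.counit_comp]
  exact M.counit_comp'

lemma cores_coassoc :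
    (TensorProduct.assoc K M.carrier D D).toLinearMap ∘ₗ
      LinearMap.rTensor D (coresρ α M) ∘ₗ coresρ α M =
      LinearMap.lTensor M.carrier (Coalgebra.comul (R := K) (A := D)) ∘ₗ coresρ α M := by
  set A := α.toLinearMap
  have h1 : LinearMap.rTensor D (coresρ α M) ∘ₗ coresρ α M =
      (TensorProduct.map (LinearMap.lTensor M.carrier A) A ∘ₗ LinearMap.rTensor C M.ρ) ∘ₗ M.ρ := by
    rw [LinearMap.map_comp_rTensor]
    rw [coresρ, ← LinearMap.comp_assoc M.ρ, LinearMap.rTensor_comp_lTensor]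
  have h2 : (TensorProduct.assoc K M.carrier D D).toLinearMap ∘ₗ
      TensorProduct.map (LinearMap.lTensor M.carrier A) A =
      LinearMap.lTensor M.carrier (TensorProduct.map A A) ∘ₗ
        (TensorProduct.assoc K M.carrier C C).toLinearMap := by
    have := TensorProduct.map_map_comp_assoc_eq (R := K)
      (f := (LinearMap.id : M.carrier →ₗ[K] M.carrier)) (g := A) (h := A)
    calc (TensorProduct.assoc K M.carrier D D).toLinearMap ∘ₗ
        TensorProduct.map (LinearMap.lTensor M.carrier A) A
        = (TensorProduct.assoc K M.carrier D D).toLinearMap ∘ₗ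
            TensorProduct.map (TensorProduct.map LinearMap.id A) A := rfl
      _ = TensorProduct.map LinearMap.id (TensorProduct.map A A) ∘ₗ
            (TensorProduct.assoc K M.carrier C C).toLinearMap := this.symm
      _ = LinearMap.lTensor M.carrier (TensorProduct.map A A) ∘ₗ
            (TensorProduct.assoc K M.carrier C C).toLinearMap := rfl
  conv_lhs => rw [h1]
  simp only [← LinearMap.comp_assoc]
  rw [h2]
  simp only [LinearMap.comp_assoc]
  rw [M.coassoc', ← LinearMap.comp_assoc, ← LinearMap.lTensor_comp, α.map_comp_comul,
    LinearMap.lTensor_comp, LinearMap.comp_assoc]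
  rfl

/-- Corestriction of scalars along a coalgebra morphism, as a functor. -/
def cores : Comod K C ⥤ Comod K D where
  obj M :=
    { carrier := M.carrier
      ρ := coresρ α M
      counit_comp' := cores_counit α M
      coassoc' := cores_coassoc α M }
  map {M N} f := ⟨f.f, by
    show coresρ α N ∘ₗ f.f = LinearMap.rTensor D f.f ∘ₗ coresρ α M
    rw [coresρ, coresρ, LinearMap.comp_assoc, f.compat, ← LinearMap.comp_assoc,
      ← LinearMap.comp_assoc, LinearMap.lTensor_comp_rTensor, LinearMap.rTensor_comp_lTensor]⟩
  map_id M := by apply ComodHom.ext; rfl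
  map_comp f g := by apply ComodHom.ext; rfl

@[simp] lemma cores_obj_carrier (M : Comod K C) : ((cores α).obj M).carrier = M.carrier := rfl
@[simp] lemma cores_map_f {M N : Comod K C} (f : M ⟶ N) : ((cores α).map f).f = f.f := rfl

end Cores

/-- The left coaction of `C` as a left `D`-comodule via `α`. -/
def lcoaction (α : C →ₗc[K] D) : C →ₗ[K] D ⊗[K] C :=
  LinearMap.rTensor C α.toLinearMap ∘ₗ Coalgebra.comul

/-- The cotensor product `N □_D C` as a submodule of `N ⊗ C`. -/
def cotensor (α : C →ₗc[K] D) (N : Comod K D) : Submodule K (N.carrier ⊗[K] C) :=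
  LinearMap.ker
    ((TensorProduct.assoc K N.carrier D C).toLinearMap ∘ₗ LinearMap.rTensor C N.ρ -
      LinearMap.lTensor N.carrier (lcoaction α))


section Rep

variable {X : Type u} [SmallCategory X]
variable (K)
variable (Cx : X → Type u) [∀ x, AddCommGroup (Cx x)] [∀ x, Module K (Cx x)]
  [∀ x, Coalgebra K (Cx x)]
variable (F : ∀ {x y : X}, (x ⟶ y) → (Cx x →ₗc[K] Cx y))

/-- A cis-comodule over a coalgebra representation. -/
structure Cis : Type (u + 1) where
  M : ∀ x, Comod K (Cx x)
  str : ∀ {x y : X} (a : x ⟶ y), (cores (F a)).obj (M x) ⟶ M y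
  str_id : ∀ x, (str (𝟙 x)).f = LinearMap.id
  str_comp : ∀ {x y z : X} (a : x ⟶ y) (b : y ⟶ z),
    (str (a ≫ b)).f = (str b).f ∘ₗ (str a).f

/-- A trans-comodule over a coalgebra representation (via the corestriction-side
structure maps `_αM : M_y → α^* M_x` for `α : x ⟶ y`). -/
structure Trans : Type (u + 1) where
  M : ∀ x, Comod K (Cx x)
  str : ∀ {x y : X} (a : x ⟶ y), M y ⟶ (cores (F a)).obj (M x)
  str_id : ∀ x, (str (𝟙 x)).f = LinearMap.id
  str_comp : ∀ {x y z : X} (a : x ⟶ y) (b : y ⟶ z),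
    (str (a ≫ b)).f = (str a).f ∘ₗ (str b).f

variable {K Cx F}

@[ext]
structure CisHom (P Q : Cis K Cx (F := @F)) : Type u where
  η : ∀ x, P.M x ⟶ Q.M x
  nat : ∀ {x y : X} (a : x ⟶ y), (η y).f ∘ₗ (P.str a).f = (Q.str a).f ∘ₗ (η x).f

@[ext]
structure TransHom (P Q : Trans K Cx (F := @F)) : Type u where
  η : ∀ x, P.M x ⟶ Q.M x
  nat : ∀ {x y : X} (a : x ⟶ y), (η x).f ∘ₗ (P.str a).f = (Q.str a).f ∘ₗ (η y).f

instance : Category (Cis K Cx (F := @F)) where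
  Hom := CisHom
  id P := ⟨fun x => 𝟙 (P.M x), fun a => by
    simp only [ComodHom.id_f, LinearMap.id_comp, LinearMap.comp_id]
    rfl⟩
  comp g h := ⟨fun x => g.η x ≫ h.η x, fun {x y} a => by
    simp only [ComodHom.comp_f]
    exact LinearMap.ext fun v => (congrArg (h.η y).f (LinearMap.congr_fun (g.nat a) v)).trans
      (LinearMap.congr_fun (h.nat a) ((g.η x).f v))⟩
  id_comp f := by apply CisHom.ext; funext x; exact Category.id_comp _
  comp_id f := by apply CisHom.ext; funext x; exact Category.comp_id _
  assoc f g h := by apply CisHom.ext; funext x; exact Category.assoc _ _ _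

instance : Category (Trans K Cx (F := @F)) where
  Hom := TransHom
  id P := ⟨fun x => 𝟙 (P.M x), fun a => by
    simp only [ComodHom.id_f, LinearMap.id_comp, LinearMap.comp_id]
    rfl⟩
  comp g h := ⟨fun x => g.η x ≫ h.η x, fun {x y} a => by
    simp only [ComodHom.comp_f]
    exact LinearMap.ext fun v => (congrArg (h.η x).f (LinearMap.congr_fun (g.nat a) v)).trans
      (LinearMap.congr_fun (h.nat a) ((g.η y).f v))⟩
  id_comp f := by apply TransHom.ext; funext x; exact Category.id_comp _
  comp_id f := by apply TransHom.ext; funext x; exact Category.comp_id _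
  assoc f g h := by apply TransHom.ext; funext x; exact Category.assoc _ _ _

@[simp] lemma CisHom.id_η (P : Cis K Cx (F := @F)) (x : X) :
    (𝟙 P : P ⟶ P).η x = 𝟙 (P.M x) := rfl

@[simp] lemma CisHom.comp_η {P Q R : Cis K Cx (F := @F)} (g : P ⟶ Q) (h : Q ⟶ R) (x : X) :
    (g ≫ h).η x = g.η x ≫ h.η x := rfl

@[simp] lemma TransHom.id_η (P : Trans K Cx (F := @F)) (x : X) :
    (𝟙 P : P ⟶ P).η x = 𝟙 (P.M x) := rfl

@[simp] lemma TransHom.comp_η {P Q R : Trans K Cx (F := @F)} (g : P ⟶ Q) (h : Q ⟶ R) (x : X) :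
    (g ≫ h).η x = g.η x ≫ h.η x := rfl

variable (K Cx F)

/-- Evaluation of cis-comodules at an object. -/
def evCis (x : X) : Cis K Cx (F := @F) ⥤ Comod K (Cx x) where
  obj P := P.M x
  map g := g.η x
  map_id _ := rfl
  map_comp _ _ := rfl

/-- Evaluation of trans-comodules at an object. -/
def evTrans (x : X) : Trans K Cx (F := @F) ⥤ Comod K (Cx x) where
  obj P := P.M x
  map g := g.η x
  map_id _ := rfl
  map_comp _ _ := rfl

end Rep

end Formal
end


noncomputable section Aux
namespace Formal

open TensorProduct CategoryTheory CategoryTheory.Limits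

variable {K : Type u} [Field K]

section ComodAux

variable {C D E : Type u}
  [AddCommGroup C] [Module K C] [Coalgebra K C]
  [AddCommGroup D] [Module K D] [Coalgebra K D]
  [AddCommGroup E] [Module K E] [Coalgebra K E]

lemma linMap_subsingleton {M N : Type u} [AddCommGroup M] [Module K M]
    [AddCommGroup N] [Module K N] (h : Subsingleton M) : Subsingleton (M →ₗ[K] N) :=
  ⟨fun f g => LinearMap.ext fun m => by
    rw [Subsingleton.elim m 0, map_zero, map_zero]⟩

/-- The zero comodule. -/
def zeroComod : Comod K C where
  carrier := PUnit.{u+1}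
  ρ := 0
  counit_comp' := LinearMap.ext fun _ => Subsingleton.elim _ _
  coassoc' := by simp only [LinearMap.comp_zero]

lemma zeroComod_subsingleton : Subsingleton (zeroComod (K := K) (C := C)).carrier :=
  inferInstanceAs (Subsingleton PUnit)

/-- The zero morphism of comodules. -/
def zeroHom (M N : Comod K C) : M ⟶ N :=
  ⟨0, by rw [LinearMap.comp_zero, LinearMap.rTensor_zero, LinearMap.zero_comp]⟩

theorem comod_mk_eq {c : Type u} [i1 : AddCommGroup c] [i2 : Module K c]
    {ρ1 ρ2 : c →ₗ[K] c ⊗[K] C} {h1 h2 h3 h4} (h : ρ1 = ρ2) :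
    (@Comod.mk K _ C _ _ _ c i1 i2 ρ1 h1 h2) = @Comod.mk K _ C _ _ _ c i1 i2 ρ2 h3 h4 := by
  subst h; rfl

lemma eqToHom_f_apply {M N : Comod K C} (h : M = N) (m : M.carrier) :
    HEq ((eqToHom h).f m) m := by subst h; rfl

lemma cores_cores (α : C →ₗc[K] D) (β : D →ₗc[K] E) (M : Comod K C) :
    (cores β).obj ((cores α).obj M) = (cores (β.comp α)).obj M := by
  refine comod_mk_eq ?_
  show LinearMap.lTensor M.carrier β.toLinearMap ∘ₗ
      (LinearMap.lTensor M.carrier α.toLinearMap ∘ₗ M.ρ) =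
    LinearMap.lTensor M.carrier (β.comp α).toLinearMap ∘ₗ M.ρ
  rw [← LinearMap.comp_assoc, ← LinearMap.lTensor_comp]
  rfl

lemma cores_id_obj (M : Comod K C) : (cores (CoalgHom.id K C)).obj M = M := by
  cases M with
  | mk c ρ h1 h2 =>
    refine comod_mk_eq ?_
    show LinearMap.lTensor c (CoalgHom.id K C).toLinearMap ∘ₗ ρ = ρ
    have : (CoalgHom.id K C).toLinearMap = LinearMap.id := rfl
    rw [this, LinearMap.lTensor_id, LinearMap.id_comp]

end ComodAux

section ExtAux

variable {X : Type u} [PartialOrder X]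
variable {Cx : X → Type u} [∀ x, AddCommGroup (Cx x)] [∀ x, Module K (Cx x)]
  [∀ x, Coalgebra K (Cx x)]
variable (F : ∀ {x y : X}, (x ⟶ y) → (Cx x →ₗc[K] Cx y))

open Classical in
/-- Extension by zero: the underlying family of comodules. -/
def exM (x : X) (M : Comod K (Cx x)) (y : X) : Comod K (Cx y) :=
  if h : x ≤ y then (cores (F (homOfLE h))).obj M else zeroComod

lemma exM_pos {x y : X} (M : Comod K (Cx x)) (h : x ≤ y) :
    exM F x M y = (cores (F (homOfLE h))).obj M := dif_pos h

lemma exM_neg {x y : X} (M : Comod K (Cx x)) (h : ¬ x ≤ y) :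
    exM F x M y = zeroComod := dif_neg h

lemma exM_neg_subsingleton {x y : X} (M : Comod K (Cx x)) (h : ¬ x ≤ y) :
    Subsingleton (exM F x M y).carrier := by
  rw [exM_neg F M h]; exact zeroComod_subsingleton

lemma exStr_eq (hFcomp : ∀ {x y z : X} (a : x ⟶ y) (b : y ⟶ z),
      F (a ≫ b) = (F b).comp (F a)) {x y z : X} (M : Comod K (Cx x)) (h : x ≤ y) (a : y ⟶ z) :
    (cores (F a)).obj (exM F x M y) = exM F x M z := by
  have hz : x ≤ z := le_trans h (leOfHom a)
  rw [exM_pos F M h, exM_pos F M hz, cores_cores, ← hFcomp (homOfLE h) a,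
    Subsingleton.elim (homOfLE h ≫ a) (homOfLE hz)]

variable (hFcomp : ∀ {x y z : X} (a : x ⟶ y) (b : y ⟶ z), F (a ≫ b) = (F b).comp (F a))

open Classical in
/-- Structure maps of the extension by zero. -/
def exStrHom (x : X) (M : Comod K (Cx x)) {y z : X} (a : y ⟶ z) :
    (cores (F a)).obj (exM F x M y) ⟶ exM F x M z :=
  if h : x ≤ y then eqToHom (exStr_eq F hFcomp M h a) else zeroHom _ _

lemma exStrHom_f_heq (x : X) (M : Comod K (Cx x)) {y z : X} (a : y ⟶ z) (h : x ≤ y)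
    (m : ((cores (F a)).obj (exM F x M y)).carrier) :
    HEq ((exStrHom F hFcomp x M a).f m) m := by
  rw [exStrHom, dif_pos h]
  exact eqToHom_f_apply _ m

/-- Extension by zero, on objects. -/
def exObj (x : X) (M : Comod K (Cx x)) : Cis K Cx (F := @F) where
  M := exM F x M
  str a := exStrHom F hFcomp x M a
  str_id y := by
    by_cases h : x ≤ y
    · exact LinearMap.ext fun m => eq_of_heq (exStrHom_f_heq F hFcomp x M (𝟙 y) h m)
    · exact (linMap_subsingleton (exM_neg_subsingleton F M h)).elim _ _
  str_comp {y z w} a b := by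
    by_cases h : x ≤ y
    · refine LinearMap.ext fun m => ?_
      have h1 := exStrHom_f_heq F hFcomp x M a h m
      have h2 := exStrHom_f_heq F hFcomp x M b (le_trans h (leOfHom a))
        ((exStrHom F hFcomp x M a).f m)
      have h3 := exStrHom_f_heq F hFcomp x M (a ≫ b) h m
      exact eq_of_heq (h3.trans (h2.trans h1).symm)
    · exact (linMap_subsingleton (exM_neg_subsingleton F M h)).elim _ _


open Classical in
/-- Extension by zero, on morphisms (one component). -/
def exMapη (x : X) {M N : Comod K (Cx x)} (f : M ⟶ N) (y : X) : exM F x M y ⟶ exM F x N y :=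
  if h : x ≤ y then
    eqToHom (exM_pos F M h) ≫ (cores (F (homOfLE h))).map f ≫ eqToHom (exM_pos F N h).symm
  else zeroHom _ _

lemma exMapη_f_heq (x : X) {M N : Comod K (Cx x)} (f : M ⟶ N) {y : X} (h : x ≤ y)
    (m : (exM F x M y).carrier) (m' : M.carrier) (hm : HEq m m') :
    HEq ((exMapη F x f y).f m) (f.f m') := by
  rw [exMapη, dif_pos h]
  have h1 : (eqToHom (exM_pos F M h)).f m = m' :=
    eq_of_heq ((eqToHom_f_apply _ m).trans hm)
  exact (eqToHom_f_apply (exM_pos F N h).symm _).trans (heq_of_eq (congrArg f.f h1))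

/-- The extension-by-zero functor. -/
def exFun (hFcomp : ∀ {x y z : X} (a : x ⟶ y) (b : y ⟶ z), F (a ≫ b) = (F b).comp (F a))
    (x : X) : Comod K (Cx x) ⥤ Cis K Cx (F := @F) where
  obj M := exObj F hFcomp x M
  map {M N} f :=
    ⟨fun y => exMapη F x f y, by
      intro y z a
      by_cases h : x ≤ y
      · have hz : x ≤ z := le_trans h (leOfHom a)
        refine LinearMap.ext fun m => ?_
        have hm : HEq m ((eqToHom (exM_pos F M h)).f m) :=
              (eqToHom_f_apply (exM_pos F M h) m).symm
        have l1 := exStrHom_f_heq F hFcomp x M a h m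
        have l2 := exMapη_f_heq F x f hz ((exStrHom F hFcomp x M a).f m)
          ((eqToHom (exM_pos F M h)).f m) (l1.trans hm)
        have l3 := exMapη_f_heq F x f h m ((eqToHom (exM_pos F M h)).f m) hm
        have l4 := exStrHom_f_heq F hFcomp x N a h ((exMapη F x f y).f m)
        exact eq_of_heq (l2.trans (l4.trans l3).symm)
      · exact (linMap_subsingleton (exM_neg_subsingleton F M h)).elim _ _⟩
  map_id M := by
    refine CisHom.ext (funext fun y => ?_)
    refine ComodHom.ext ?_
    by_cases h : x ≤ y
    · refine LinearMap.ext fun m => ?_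
      have hm : HEq m ((eqToHom (exM_pos F M h)).f m) :=
              (eqToHom_f_apply (exM_pos F M h) m).symm
      have l1 := exMapη_f_heq F x (𝟙 M) h m ((eqToHom (exM_pos F M h)).f m) hm
      exact eq_of_heq (l1.trans hm.symm)
    · exact (linMap_subsingleton (exM_neg_subsingleton F M h)).elim _ _
  map_comp {M N P} f g := by
    refine CisHom.ext (funext fun y => ?_)
    refine ComodHom.ext ?_
    by_cases h : x ≤ y
    · refine LinearMap.ext fun m => ?_
      have hm : HEq m ((eqToHom (exM_pos F M h)).f m) :=
              (eqToHom_f_apply (exM_pos F M h) m).symm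
      have l1 := exMapη_f_heq F x (f ≫ g) h m ((eqToHom (exM_pos F M h)).f m) hm
      have l2 := exMapη_f_heq F x f h m ((eqToHom (exM_pos F M h)).f m) hm
      have l3 := exMapη_f_heq F x g h ((exMapη F x f y).f m)
        (f.f ((eqToHom (exM_pos F M h)).f m)) l2
      exact eq_of_heq (l1.trans l3.symm)
    · exact (linMap_subsingleton (exM_neg_subsingleton F M h)).elim _ _

lemma exM_self (hFid : ∀ x : X, F (𝟙 x) = CoalgHom.id K (Cx x)) (x : X)
    (M : Comod K (Cx x)) : exM F x M x = M := by
  rw [exM_pos F M (le_refl x), Subsingleton.elim (homOfLE (le_refl x)) (𝟙 x), hFid,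
    cores_id_obj]

lemma cis_str_f_heq (P : Cis K Cx (F := @F)) {y z : X} {a b : y ⟶ z} (hab : a = b) :
    HEq (P.str a).f (P.str b).f := by subst hab; rfl

open Classical in
/-- The component at `y` of the transpose of `g : M ⟶ P.M x` under the adjunction. -/
def backη (x : X) {M : Comod K (Cx x)} {P : Cis K Cx (F := @F)} (g : M ⟶ P.M x) (y : X) :
    exM F x M y ⟶ P.M y :=
  if h : x ≤ y then
    eqToHom (exM_pos F M h) ≫ (cores (F (homOfLE h))).map g ≫ P.str (homOfLE h)
  else zeroHom _ _

lemma backη_f_eq (x : X) {M : Comod K (Cx x)} {P : Cis K Cx (F := @F)} (g : M ⟶ P.M x)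
    {y : X} (h : x ≤ y) (m : (exM F x M y).carrier) (m' : M.carrier) (hm : HEq m m') :
    (backη F x g y).f m = (P.str (homOfLE h)).f (g.f m') := by
  rw [backη, dif_pos h]
  have h1 : (eqToHom (exM_pos F M h)).f m = m' :=
    eq_of_heq ((eqToHom_f_apply _ m).trans hm)
  show (P.str (homOfLE h)).f (g.f ((eqToHom (exM_pos F M h)).f m)) = _
  rw [h1]

lemma backη_nat (hFcomp : ∀ {x y z : X} (a : x ⟶ y) (b : y ⟶ z),
      F (a ≫ b) = (F b).comp (F a))
    (x : X) {M : Comod K (Cx x)} {P : Cis K Cx (F := @F)} (g : M ⟶ P.M x)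
    {y z : X} (a : y ⟶ z) :
    (backη F x g z).f ∘ₗ (exStrHom F hFcomp x M a).f
      = (P.str a).f ∘ₗ (backη F x g y).f := by
  by_cases h : x ≤ y
  · have hz : x ≤ z := le_trans h (leOfHom a)
    refine LinearMap.ext fun m => ?_
    have hm : HEq m ((eqToHom (exM_pos F M h)).f m) :=
              (eqToHom_f_apply (exM_pos F M h) m).symm
    have l1 : (backη F x g z).f ((exStrHom F hFcomp x M a).f m)
        = (P.str (homOfLE hz)).f (g.f ((eqToHom (exM_pos F M h)).f m)) :=
      backη_f_eq F x g hz _ _ ((exStrHom_f_heq F hFcomp x M a h m).trans hm)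
    have l2 : (backη F x g y).f m
        = (P.str (homOfLE h)).f (g.f ((eqToHom (exM_pos F M h)).f m)) :=
      backη_f_eq F x g h m _ hm
    have l3 : (P.str (homOfLE h ≫ a)).f = (P.str (homOfLE hz)).f :=
      eq_of_heq (cis_str_f_heq F P (Subsingleton.elim _ _))
    show (backη F x g z).f ((exStrHom F hFcomp x M a).f m)
      = (P.str a).f ((backη F x g y).f m)
    rw [l1, l2, ← l3, P.str_comp (homOfLE h) a]
    rfl
  · exact (linMap_subsingleton (exM_neg_subsingleton F M h)).elim _ _

/-- The extension-by-zero ⊣ evaluation adjunction. -/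
def exAdj (hFid : ∀ x : X, F (𝟙 x) = CoalgHom.id K (Cx x))
    (hFcomp : ∀ {x y z : X} (a : x ⟶ y) (b : y ⟶ z), F (a ≫ b) = (F b).comp (F a))
    (x : X) : exFun F hFcomp x ⊣ evCis K Cx (fun {_ _} => @F _ _) x :=
  Adjunction.mkOfHomEquiv
  { homEquiv := fun M P =>
      { toFun := fun φ => eqToHom (exM_self F hFid x M).symm ≫ φ.η x
        invFun := fun g => ⟨fun y => backη F x g y, fun {y z} a => backη_nat F hFcomp x g a⟩
        left_inv := by
          intro φ
          refine CisHom.ext (funext fun y => ?_)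
          refine ComodHom.ext ?_
          by_cases h : x ≤ y
          · refine LinearMap.ext fun m => ?_
            have hm : HEq m ((eqToHom (exM_pos F M h)).f m) :=
              (eqToHom_f_apply (exM_pos F M h) m).symm
            have hm'' : HEq ((eqToHom (exM_self F hFid x M).symm).f
                ((eqToHom (exM_pos F M h)).f m)) ((eqToHom (exM_pos F M h)).f m) :=
              eqToHom_f_apply _ _
            have l1 : (backη F x (eqToHom (exM_self F hFid x M).symm ≫ φ.η x) y).f m
                = (P.str (homOfLE h)).f ((eqToHom (exM_self F hFid x M).symm ≫ φ.η x).f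
                    ((eqToHom (exM_pos F M h)).f m)) :=
              backη_f_eq F x _ h m _ hm
            have hnat := LinearMap.congr_fun (φ.nat (homOfLE h))
              ((eqToHom (exM_self F hFid x M).symm).f ((eqToHom (exM_pos F M h)).f m))
            have hstr : ((exObj F hFcomp x M).str (homOfLE h)).f
                ((eqToHom (exM_self F hFid x M).symm).f ((eqToHom (exM_pos F M h)).f m)) = m :=
              eq_of_heq ((exStrHom_f_heq F hFcomp x M (homOfLE h) le_rfl _).trans
                (hm''.trans hm.symm))
            have hnat' : (φ.η y).f (((exObj F hFcomp x M).str (homOfLE h)).f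
                  ((eqToHom (exM_self F hFid x M).symm).f ((eqToHom (exM_pos F M h)).f m)))
                = (P.str (homOfLE h)).f ((φ.η x).f
                  ((eqToHom (exM_self F hFid x M).symm).f ((eqToHom (exM_pos F M h)).f m))) :=
              hnat
            show (backη F x (eqToHom (exM_self F hFid x M).symm ≫ φ.η x) y).f m
              = (φ.η y).f m
            rw [l1]
            have hg : (eqToHom (exM_self F hFid x M).symm ≫ φ.η x).f
                ((eqToHom (exM_pos F M h)).f m)
                = (φ.η x).f ((eqToHom (exM_self F hFid x M).symm).f
                    ((eqToHom (exM_pos F M h)).f m)) := rfl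
            rw [hg, ← hnat', hstr]
          · exact (linMap_subsingleton (exM_neg_subsingleton F M h)).elim _ _
        right_inv := by
          intro g
          refine ComodHom.ext ?_
          refine LinearMap.ext fun m => ?_
          have hm : HEq ((eqToHom (exM_self F hFid x M).symm).f m) m :=
            eqToHom_f_apply _ m
          have l1 : (backη F x g x).f ((eqToHom (exM_self F hFid x M).symm).f m)
              = (P.str (homOfLE (le_refl x))).f (g.f m) :=
            backη_f_eq F x g le_rfl _ m hm
          have l2 : (P.str (homOfLE (le_refl x))).f = (P.str (𝟙 x)).f :=
            eq_of_heq (cis_str_f_heq F P (Subsingleton.elim _ _))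
          show (backη F x g x).f ((eqToHom (exM_self F hFid x M).symm).f m) = g.f m
          rw [l1, l2, P.str_id x]
          rfl }
    homEquiv_naturality_left_symm := by
      intro M M' P f g
      refine CisHom.ext (funext fun y => ?_)
      refine ComodHom.ext ?_
      by_cases h : x ≤ y
      · refine LinearMap.ext fun m => ?_
        have hm : HEq m ((eqToHom (exM_pos F M h)).f m) :=
              (eqToHom_f_apply (exM_pos F M h) m).symm
        have li := exMapη_f_heq F x f h m ((eqToHom (exM_pos F M h)).f m) hm
        have l2 : (backη F x g y).f ((exMapη F x f y).f m)
            = (P.str (homOfLE h)).f (g.f (f.f ((eqToHom (exM_pos F M h)).f m))) :=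
          backη_f_eq F x g h _ _ li
        have l1 : (backη F x (f ≫ g) y).f m
            = (P.str (homOfLE h)).f ((f ≫ g).f ((eqToHom (exM_pos F M h)).f m)) :=
          backη_f_eq F x (f ≫ g) h m _ hm
        show (backη F x (f ≫ g) y).f m = (backη F x g y).f ((exMapη F x f y).f m)
        rw [l1, l2]
        rfl
      · exact (linMap_subsingleton (exM_neg_subsingleton F M h)).elim _ _
    homEquiv_naturality_right := by
      intro M P Q φ p
      show eqToHom (exM_self F hFid x M).symm ≫ (φ.η x ≫ p.η x)
        = (eqToHom (exM_self F hFid x M).symm ≫ φ.η x) ≫ p.η x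
      exact (Category.assoc _ _ _).symm }

end ExtAux

section ColimAux

variable {C : Type u} [AddCommGroup C] [Module K C] [Coalgebra K C]
variable {J : Type} [SmallCategory J]

/-- The forgetful functor to modules. -/
def forgetComod : Comod K C ⥤ ModuleCat.{u} K where
  obj M := ModuleCat.of K M.carrier
  map f := ModuleCat.ofHom f.f
  map_id _ := rfl
  map_comp _ _ := rfl

variable (D : J ⥤ Comod K C)

/-- Underlying module of the colimit. -/
abbrev colimL : ModuleCat.{u} K := colimit (D ⋙ forgetComod)

/-- Colimit injections. -/
abbrev colimι (j : J) : (D.obj j).carrier →ₗ[K] (colimL D : Type u) :=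
  (colimit.ι (D ⋙ forgetComod) j).hom

lemma colim_lext {V : Type u} [AddCommGroup V] [Module K V]
    {f g : (colimL D : Type u) →ₗ[K] V}
    (h : ∀ j, f ∘ₗ colimι D j = g ∘ₗ colimι D j) : f = g := by
  have := colimit.hom_ext (X := ModuleCat.of K V) (f := ModuleCat.ofHom f)
    (f' := ModuleCat.ofHom g) (fun j => ModuleCat.hom_ext (h j))
  exact congrArg ModuleCat.Hom.hom this

lemma counit_square {M N : Type u} [AddCommGroup M] [Module K M] [AddCommGroup N]
    [Module K N] (f : M →ₗ[K] N) :
    (TensorProduct.rid K N).toLinearMap ∘ₗ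
        LinearMap.lTensor N (Coalgebra.counit (R := K) (A := C)) ∘ₗ LinearMap.rTensor C f
      = f ∘ₗ (TensorProduct.rid K M).toLinearMap ∘ₗ
          LinearMap.lTensor M (Coalgebra.counit (R := K) (A := C)) := by
  apply TensorProduct.ext'
  intro m c
  simp

lemma assoc_rTensor_nat {M N : Type u} [AddCommGroup M] [Module K M] [AddCommGroup N]
    [Module K N] (f : M →ₗ[K] N) :
    (TensorProduct.assoc K N C C).toLinearMap ∘ₗ
        LinearMap.rTensor C (LinearMap.rTensor C f)
      = LinearMap.rTensor (C ⊗[K] C) f ∘ₗ (TensorProduct.assoc K M C C).toLinearMap := by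
  have h := TensorProduct.map_map_comp_assoc_eq (f := f)
    (g := (LinearMap.id : C →ₗ[K] C)) (h := (LinearMap.id : C →ₗ[K] C))
  have h2 : LinearMap.rTensor C (LinearMap.rTensor C f)
      = TensorProduct.map (TensorProduct.map f LinearMap.id) LinearMap.id := rfl
  have h3 : LinearMap.rTensor (C ⊗[K] C) f
      = TensorProduct.map f (TensorProduct.map LinearMap.id LinearMap.id) := by
    rw [TensorProduct.map_id]; rfl
  rw [h2, h3]
  exact h.symm

/-- The coaction cocone. -/
def colimρCocone : Cocone (D ⋙ forgetComod) where
  pt := ModuleCat.of K ((colimL D : Type u) ⊗[K] C)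
  ι :=
    { app := fun j => ModuleCat.ofHom (LinearMap.rTensor C (colimι D j) ∘ₗ (D.obj j).ρ)
      naturality := fun j j' f => by
        have hw : colimι D j' ∘ₗ (D.map f).f = colimι D j :=
          congrArg ModuleCat.Hom.hom (colimit.w (D ⋙ forgetComod) f)
        refine ModuleCat.hom_ext ?_
        show (LinearMap.rTensor C (colimι D j') ∘ₗ (D.obj j').ρ) ∘ₗ (D.map f).f
          = LinearMap.id ∘ₗ (LinearMap.rTensor C (colimι D j) ∘ₗ (D.obj j).ρ)
        rw [LinearMap.id_comp, LinearMap.comp_assoc, (D.map f).compat,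
          ← LinearMap.comp_assoc, ← LinearMap.rTensor_comp, hw] }

/-- The coaction on the colimit. -/
def colimρ : (colimL D : Type u) →ₗ[K] (colimL D : Type u) ⊗[K] C :=
  (colimit.desc (D ⋙ forgetComod) (colimρCocone D)).hom

lemma colimρ_ι (j : J) :
    colimρ D ∘ₗ colimι D j = LinearMap.rTensor C (colimι D j) ∘ₗ (D.obj j).ρ :=
  congrArg ModuleCat.Hom.hom (colimit.ι_desc (colimρCocone D) j)

/-- The colimit comodule. -/
abbrev colimComod : Comod K C where
  carrier := colimL D
  ρ := colimρ D
  counit_comp' := by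
    refine colim_lext D (fun j => ?_)
    simp only [LinearMap.comp_assoc]
    rw [colimρ_ι D j,
      ← LinearMap.comp_assoc (D.obj j).ρ (LinearMap.rTensor C (colimι D j))
        (LinearMap.lTensor _ (Coalgebra.counit (R := K) (A := C))),
      ← LinearMap.comp_assoc (D.obj j).ρ
        (LinearMap.lTensor _ (Coalgebra.counit (R := K) (A := C)) ∘ₗ
          LinearMap.rTensor C (colimι D j))
        ((TensorProduct.rid K (colimL D : Type u)).toLinearMap),
      counit_square (colimι D j)]
    simp only [LinearMap.comp_assoc]
    rw [(D.obj j).counit_comp', LinearMap.comp_id, LinearMap.id_comp]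
  coassoc' := by
    refine colim_lext D (fun j => ?_)
    simp only [LinearMap.comp_assoc]
    rw [colimρ_ι D j,
      ← LinearMap.comp_assoc (D.obj j).ρ (LinearMap.rTensor C (colimι D j))
        (LinearMap.rTensor C (colimρ D)),
      ← LinearMap.rTensor_comp, colimρ_ι D j, LinearMap.rTensor_comp]
    simp only [LinearMap.comp_assoc]
    rw [← LinearMap.comp_assoc (LinearMap.rTensor C (D.obj j).ρ ∘ₗ (D.obj j).ρ)
      (LinearMap.rTensor C (LinearMap.rTensor C (colimι D j)))
      ((TensorProduct.assoc K (colimL D : Type u) C C).toLinearMap)]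
    rw [assoc_rTensor_nat (colimι D j)]
    simp only [LinearMap.comp_assoc]
    rw [(D.obj j).coassoc']
    rw [← LinearMap.comp_assoc (D.obj j).ρ (LinearMap.rTensor C (colimι D j))
      (LinearMap.lTensor _ (Coalgebra.comul (R := K) (A := C))),
      LinearMap.lTensor_comp_rTensor, ← LinearMap.rTensor_comp_lTensor,
      LinearMap.comp_assoc]


/-- The colimit cocone in `Comod`. -/
def colimCocone : Cocone D where
  pt := colimComod D
  ι :=
    { app := fun j => ⟨colimι D j, colimρ_ι D j⟩
      naturality := fun j j' f => by
        refine ComodHom.ext ?_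
        show colimι D j' ∘ₗ (D.map f).f = LinearMap.id ∘ₗ colimι D j
        rw [LinearMap.id_comp]
        exact congrArg ModuleCat.Hom.hom (colimit.w (D ⋙ forgetComod) f) }

/-- The underlying cocone of a cocone in `Comod`. -/
def coconeU (t : Cocone D) : Cocone (D ⋙ forgetComod) where
  pt := ModuleCat.of K t.pt.carrier
  ι :=
    { app := fun j => ModuleCat.ofHom (t.ι.app j).f
      naturality := fun j j' f => by
        refine ModuleCat.hom_ext ?_
        show (t.ι.app j').f ∘ₗ (D.map f).f = LinearMap.id ∘ₗ (t.ι.app j).f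
        rw [LinearMap.id_comp]
        have h2 := congrArg ComodHom.f (t.ι.naturality f)
        exact h2.trans (LinearMap.id_comp _) }

/-- Descent from the colimit comodule. -/
def colimDesc (t : Cocone D) : colimComod D ⟶ t.pt :=
  ⟨(colimit.desc (D ⋙ forgetComod) (coconeU D t)).hom, by
    refine colim_lext D (fun j => ?_)
    have hd : (colimit.desc (D ⋙ forgetComod) (coconeU D t)).hom ∘ₗ colimι D j
        = (t.ι.app j).f := congrArg ModuleCat.Hom.hom (colimit.ι_desc (coconeU D t) j)
    have hc : t.pt.ρ ∘ₗ (t.ι.app j).f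
        = LinearMap.rTensor C (t.ι.app j).f ∘ₗ (D.obj j).ρ := (t.ι.app j).compat
    have hρ : (colimComod D).ρ ∘ₗ colimι D j
        = LinearMap.rTensor C (colimι D j) ∘ₗ (D.obj j).ρ := colimρ_ι D j
    refine LinearMap.ext fun m => ?_
    have e1 := LinearMap.congr_fun hd m
    have e2 := LinearMap.congr_fun hc m
    have e3 := LinearMap.congr_fun hρ m
    have e4 := LinearMap.congr_fun (LinearMap.rTensor_comp C
      (colimit.desc (D ⋙ forgetComod) (coconeU D t)).hom (colimι D j)) ((D.obj j).ρ m)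
    have e5 := congrArg (fun g => LinearMap.rTensor C g ((D.obj j).ρ m)) hd
    exact ((congrArg t.pt.ρ e1).trans e2).trans ((congrArg (LinearMap.rTensor C
      (colimit.desc (D ⋙ forgetComod) (coconeU D t)).hom) e3).trans (e4.symm.trans e5)).symm⟩

/-- The colimit cocone in `Comod` is a colimit. -/
def colimIsColimit : IsColimit (colimCocone D) where
  desc t := colimDesc D t
  fac t j := by
    refine ComodHom.ext ?_
    show (colimit.desc (D ⋙ forgetComod) (coconeU D t)).hom ∘ₗ colimι D j = (t.ι.app j).f
    exact congrArg ModuleCat.Hom.hom (colimit.ι_desc (coconeU D t) j)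
  uniq t m hm := by
    refine ComodHom.ext ?_
    refine colim_lext D (fun j => ?_)
    have h1 : m.f ∘ₗ colimι D j = (t.ι.app j).f := congrArg ComodHom.f (hm j)
    erw [h1]
    exact (congrArg ModuleCat.Hom.hom (colimit.ι_desc (coconeU D t) j)).symm

variable {C' : Type u} [AddCommGroup C'] [Module K C'] [Coalgebra K C']

/-- The underlying cocone of a cocone in `Comod` over a corestricted diagram. -/
def coconeUC (α : C →ₗc[K] C') (t : Cocone (D ⋙ cores α)) : Cocone (D ⋙ forgetComod) where
  pt := ModuleCat.of K t.pt.carrier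
  ι :=
    { app := fun j => ModuleCat.ofHom (t.ι.app j).f
      naturality := fun j j' f => by
        refine ModuleCat.hom_ext ?_
        show (t.ι.app j').f ∘ₗ (D.map f).f = LinearMap.id ∘ₗ (t.ι.app j).f
        rw [LinearMap.id_comp]
        have h2 := congrArg ComodHom.f (t.ι.naturality f)
        exact h2.trans (LinearMap.id_comp _) }

/-- Descent from the corestricted colimit comodule. -/
def coresColimDesc (α : C →ₗc[K] C') (t : Cocone (D ⋙ cores α)) :
    (cores α).obj (colimComod D) ⟶ t.pt :=
  ⟨(colimit.desc (D ⋙ forgetComod) (coconeUC D α t)).hom, by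
    refine colim_lext D (fun j => ?_)
    have hd : (colimit.desc (D ⋙ forgetComod) (coconeUC D α t)).hom ∘ₗ colimι D j
        = (t.ι.app j).f := congrArg ModuleCat.Hom.hom (colimit.ι_desc (coconeUC D α t) j)
    have hc := (t.ι.app j).compat
    refine LinearMap.ext fun m => ?_
    have e1 := LinearMap.congr_fun hd m
    have e2 := LinearMap.congr_fun hc m
    have e3 := LinearMap.congr_fun (colimρ_ι D j) m
    have f1 := LinearMap.congr_fun (LinearMap.lTensor_comp_rTensor (f := colimι D j) (g := α.toLinearMap))
      ((D.obj j).ρ m)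
    have f2 := LinearMap.congr_fun (LinearMap.rTensor_comp_lTensor (f := colimι D j) (g := α.toLinearMap))
      ((D.obj j).ρ m)
    have e4 := LinearMap.congr_fun (LinearMap.rTensor_comp C'
      (colimit.desc (D ⋙ forgetComod) (coconeUC D α t)).hom (colimι D j))
      (((cores α).obj (D.obj j)).ρ m)
    have e5 := congrArg (fun g => LinearMap.rTensor C' g (((cores α).obj (D.obj j)).ρ m)) hd
    exact ((congrArg t.pt.ρ e1).trans e2).trans (((congrArg (fun y =>
      LinearMap.rTensor C' (colimit.desc (D ⋙ forgetComod) (coconeUC D α t)).hom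
        (LinearMap.lTensor _ α.toLinearMap y)) e3).trans
      (congrArg (LinearMap.rTensor C' (colimit.desc (D ⋙ forgetComod) (coconeUC D α t)).hom)
        (f1.trans f2.symm))).trans (e4.symm.trans e5)).symm⟩

lemma coresColimDesc_f_ι (α : C →ₗc[K] C') (t : Cocone (D ⋙ cores α)) (j : J) :
    (coresColimDesc D α t).f ∘ₗ colimι D j = (t.ι.app j).f :=
  congrArg ModuleCat.Hom.hom (colimit.ι_desc (coconeUC D α t) j)

end ColimAux

section CisColimAux

variable {X : Type u} [PartialOrder X]
variable {Cx : X → Type u} [∀ x, AddCommGroup (Cx x)] [∀ x, Module K (Cx x)]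
  [∀ x, Coalgebra K (Cx x)]
variable (F : ∀ {x y : X}, (x ⟶ y) → (Cx x →ₗc[K] Cx y))
variable {J : Type} [SmallCategory J]

/-- Shorthand for the evaluation functor. -/
abbrev evy (y : X) : Cis K Cx (F := @F) ⥤ Comod K (Cx y) :=
  evCis K Cx (fun {_ _} => @F _ _) y

variable (G : J ⥤ Cis K Cx (F := @F))

/-- The cocone used to define structure maps on the objectwise colimit. -/
def strCocone {y z : X} (a : y ⟶ z) :
    Cocone ((G ⋙ evy F y) ⋙ cores (F a)) where
  pt := colimComod (G ⋙ evy F z)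
  ι :=
    { app := fun j => (G.obj j).str a ≫ (colimCocone (G ⋙ evy F z)).ι.app j
      naturality := fun j j' f => by
        refine ComodHom.ext ?_
        have hw : colimι (G ⋙ evy F z) j' ∘ₗ ((G.map f).η z).f
            = colimι (G ⋙ evy F z) j :=
          congrArg ModuleCat.Hom.hom (colimit.w ((G ⋙ evy F z) ⋙ forgetComod) f)
        show (colimι (G ⋙ evy F z) j' ∘ₗ ((G.obj j').str a).f) ∘ₗ ((G.map f).η y).f
          = LinearMap.id ∘ₗ (colimι (G ⋙ evy F z) j ∘ₗ ((G.obj j).str a).f)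
        erw [LinearMap.id_comp, LinearMap.comp_assoc, ← (G.map f).nat a,
          ← LinearMap.comp_assoc, hw]
        rfl }

/-- The objectwise colimit of a diagram of cis-comodules. -/
def cisColimObj : Cis K Cx (F := @F) where
  M y := colimComod (G ⋙ evy F y)
  str {y z} a := coresColimDesc (G ⋙ evy F y) (F a) (strCocone F G a)
  str_id y := by
    refine colim_lext (G ⋙ evy F y) (fun j => ?_)
    have h1 : (coresColimDesc (G ⋙ evy F y) (F (𝟙 y)) (strCocone F G (𝟙 y))).f ∘ₗ
          colimι (G ⋙ evy F y) j
        = colimι (G ⋙ evy F y) j ∘ₗ ((G.obj j).str (𝟙 y)).f :=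
      coresColimDesc_f_ι (G ⋙ evy F y) (F (𝟙 y)) (strCocone F G (𝟙 y)) j
    erw [h1, (G.obj j).str_id, LinearMap.comp_id]
  str_comp {y z w} a b := by
    refine colim_lext (G ⋙ evy F y) (fun j => ?_)
    have h1 : (coresColimDesc (G ⋙ evy F y) (F (a ≫ b)) (strCocone F G (a ≫ b))).f ∘ₗ
          colimι (G ⋙ evy F y) j
        = colimι (G ⋙ evy F w) j ∘ₗ ((G.obj j).str (a ≫ b)).f :=
      coresColimDesc_f_ι (G ⋙ evy F y) (F (a ≫ b)) (strCocone F G (a ≫ b)) j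
    have h2 : (coresColimDesc (G ⋙ evy F y) (F a) (strCocone F G a)).f ∘ₗ
          colimι (G ⋙ evy F y) j
        = colimι (G ⋙ evy F z) j ∘ₗ ((G.obj j).str a).f :=
      coresColimDesc_f_ι (G ⋙ evy F y) (F a) (strCocone F G a) j
    have h3 : (coresColimDesc (G ⋙ evy F z) (F b) (strCocone F G b)).f ∘ₗ
          colimι (G ⋙ evy F z) j
        = colimι (G ⋙ evy F w) j ∘ₗ ((G.obj j).str b).f :=
      coresColimDesc_f_ι (G ⋙ evy F z) (F b) (strCocone F G b) j
    erw [h1, LinearMap.comp_assoc, h2, ← LinearMap.comp_assoc _ (colimι (G ⋙ evy F z) j) _,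
      h3, LinearMap.comp_assoc, ← (G.obj j).str_comp a b]
    rfl

/-- The objectwise colimit cocone of a diagram of cis-comodules. -/
def cisColimCocone : Cocone G where
  pt := cisColimObj F G
  ι :=
    { app := fun j =>
        ⟨fun y => (colimCocone (G ⋙ evy F y)).ι.app j, by
          intro y z a
          have h2 : (coresColimDesc (G ⋙ evy F y) (F a) (strCocone F G a)).f ∘ₗ
                colimι (G ⋙ evy F y) j
              = colimι (G ⋙ evy F z) j ∘ₗ ((G.obj j).str a).f :=
            coresColimDesc_f_ι (G ⋙ evy F y) (F a) (strCocone F G a) j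
          exact h2.symm⟩
      naturality := fun j j' f => by
        refine CisHom.ext (funext fun y => ?_)
        refine ComodHom.ext ?_
        show colimι (G ⋙ evy F y) j' ∘ₗ ((G.map f).η y).f
          = LinearMap.id ∘ₗ colimι (G ⋙ evy F y) j
        rw [LinearMap.id_comp]
        exact congrArg ModuleCat.Hom.hom (colimit.w ((G ⋙ evy F y) ⋙ forgetComod) f) }

/-- The objectwise colimit cocone is a colimit in the category of cis-comodules. -/
def cisColimIsColimit : IsColimit (cisColimCocone F G) where
  desc t :=
    ⟨fun y => colimDesc (G ⋙ evy F y) ((evy F y).mapCocone t), by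
      intro y z a
      refine colim_lext (G ⋙ evy F y) (fun j => ?_)
      have h1 : (coresColimDesc (G ⋙ evy F y) (F a) (strCocone F G a)).f ∘ₗ
            colimι (G ⋙ evy F y) j
          = colimι (G ⋙ evy F z) j ∘ₗ ((G.obj j).str a).f :=
        coresColimDesc_f_ι (G ⋙ evy F y) (F a) (strCocone F G a) j
      have h2 : (colimDesc (G ⋙ evy F z) ((evy F z).mapCocone t)).f ∘ₗ
            colimι (G ⋙ evy F z) j = ((t.ι.app j).η z).f :=
        congrArg ModuleCat.Hom.hom (colimit.ι_desc (coconeU (G ⋙ evy F z) ((evy F z).mapCocone t)) j)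
      have h3 : (colimDesc (G ⋙ evy F y) ((evy F y).mapCocone t)).f ∘ₗ
            colimι (G ⋙ evy F y) j = ((t.ι.app j).η y).f :=
        congrArg ModuleCat.Hom.hom (colimit.ι_desc (coconeU (G ⋙ evy F y) ((evy F y).mapCocone t)) j)
      have h1' : ((cisColimCocone F G).pt.str a).f ∘ₗ colimι (G ⋙ evy F y) j
          = colimι (G ⋙ evy F z) j ∘ₗ ((G.obj j).str a).f := h1
      refine LinearMap.ext fun m => ?_
      exact (congrArg (colimDesc (G ⋙ evy F z) ((evy F z).mapCocone t)).f
        (LinearMap.congr_fun h1' m)).trans ((LinearMap.congr_fun h2 (((G.obj j).str a).f m)).trans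
        ((LinearMap.congr_fun ((t.ι.app j).nat a) m).trans
          (congrArg (t.pt.str a).f (LinearMap.congr_fun h3 m)).symm))⟩
  fac t j := by
    refine CisHom.ext (funext fun y => ?_)
    refine ComodHom.ext ?_
    exact congrArg ModuleCat.Hom.hom (colimit.ι_desc (coconeU (G ⋙ evy F y) ((evy F y).mapCocone t)) j)
  uniq t m hm := by
    refine CisHom.ext (funext fun y => ?_)
    refine ComodHom.ext ?_
    refine colim_lext (G ⋙ evy F y) (fun j => ?_)
    have h1 : (m.η y).f ∘ₗ colimι (G ⋙ evy F y) j = ((t.ι.app j).η y).f :=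
      congrArg (fun φ => (CisHom.η φ y).f) (hm j)
    erw [h1]
    exact (congrArg ModuleCat.Hom.hom (colimit.ι_desc (coconeU (G ⋙ evy F y) ((evy F y).mapCocone t)) j)).symm

/-- Evaluation maps the objectwise colimit cocone to a colimit cocone. -/
def evMapCoconeIsColimit (x : X) :
    IsColimit ((evy F x).mapCocone (cisColimCocone F G)) :=
  IsColimit.ofIsoColimit (colimIsColimit (G ⋙ evy F x))
    (Cocones.ext (Iso.refl _) (fun j => by
      refine ComodHom.ext ?_
      show LinearMap.id ∘ₗ colimι (G ⋙ evy F x) j = colimι (G ⋙ evy F x) j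
      rw [LinearMap.id_comp]))

lemma evCisPreservesColimitsOfShape (x : X) :
    PreservesColimitsOfShape J (evCis K Cx (fun {_ _} => @F _ _) x) :=
  ⟨fun {G'} => preservesColimit_of_preserves_colimit_cocone
    (cisColimIsColimit F G') (evMapCoconeIsColimit F G' x)⟩

end CisColimAux
end Formal
end Aux

namespace Formal

/-- over a poset, the extension-by-zero functor `ex_x^{cs}` (given by
corestriction below `x` and zero elsewhere) is left adjoint to the (exact) evaluation functor
at `x`, and hence preserves projective objects. -/
theorem cis_extension_adjoint_evaluation
    {K : Type u} [Field K] {X : Type u} [PartialOrder X]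
    (Cx : X → Type u) [∀ x, AddCommGroup (Cx x)] [∀ x, Module K (Cx x)]
    [∀ x, Coalgebra K (Cx x)]
    (F : ∀ {x y : X}, (x ⟶ y) → (Cx x →ₗc[K] Cx y))
    (hFid : ∀ x : X, F (𝟙 x) = CoalgHom.id K (Cx x))
    (hFcomp : ∀ {x y z : X} (a : x ⟶ y) (b : y ⟶ z), F (a ≫ b) = (F b).comp (F a))
    (x : X) :
    ∃ ex : Comod K (Cx x) ⥤ Cis K Cx (F := @F),
      (∀ (M : Comod K (Cx x)) (y : X) (h : x ≤ y),
        (ex.obj M).M y = (cores (F (homOfLE h))).obj M) ∧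
      (∀ (M : Comod K (Cx x)) (y : X), ¬ x ≤ y → Subsingleton ((ex.obj M).M y).carrier) ∧
      Nonempty (ex ⊣ evCis K Cx (fun {_ _} => @F _ _) x) ∧
      Nonempty (PreservesFiniteLimits (evCis K Cx (fun {_ _} => @F _ _) x)) ∧
      Nonempty (PreservesFiniteColimits (evCis K Cx (fun {_ _} => @F _ _) x)) ∧
      (∀ P : Comod K (Cx x), Projective P → Projective (ex.obj P)) := by
  refine ⟨exFun F hFcomp x, ?_, ?_, ?_, ?_, ?_, ?_⟩
  · intro M y h
    exact exM_pos F M h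
  · intro M y h
    exact exM_neg_subsingleton F M h
  · exact ⟨exAdj F hFid hFcomp x⟩
  · haveI : PreservesLimitsOfSize.{0, 0} (evCis K Cx (fun {_ _} => @F _ _) x) :=
      (exAdj F hFid hFcomp x).rightAdjoint_preservesLimits
    exact ⟨inferInstance⟩
  · exact ⟨⟨fun J _ _ => evCisPreservesColimitsOfShape F x⟩⟩
  · intro P hP
    haveI : PreservesColimitsOfShape WalkingSpan (evCis K Cx (fun {_ _} => @F _ _) x) :=
      evCisPreservesColimitsOfShape F x
    haveI : (evCis K Cx (fun {_ _} => @F _ _) x).PreservesEpimorphisms := inferInstance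
    exact (exAdj F hFid hFcomp x).map_projective P hP

end Formal
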